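/- arXiv:1512.01488 — 6 statements merged into one kernel-verified Lean document; each statement's English description precedes it below -/
import Mathlib

section
/- If S = (S_t)_{t=0}^T is an adapted process with values in the bid-ask spread (i.e., underline{S}^j_t ≤ S^j_t ≤ overline{S}^j_t for all t, j), and H = (H_t)_{t=0}^{T+1} is a strategy with H_0 = H_{T+1} = 0, then the transaction-cost value V_T(H) = Σ_{t=0}^T Σ_{j=1}^d (H^j_t - H^j_{t+1})(overline{S}^j_t 1_{H^j_t ≤ H^j_{t+1}} + underline{S}^j_t 1_{H^j_{t+1} ≤ H^j_t}) satisfies V_T(H) ≤ (H ∘ S)_T, where (H ∘ S)_T = Σ_{t=1}^T H_t · (S_t - S_{t-1}) is the discrete stochastic integral. -/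
lemma abel_helper (T : ℕ) (a s : ℕ → ℝ) (h0 : a 0 = 0) (hT : a (T + 1) = 0) :
    ∑ t ∈ Finset.range (T + 1), (a t - a (t + 1)) * s t
      = ∑ t ∈ Finset.range T, a (t + 1) * (s (t + 1) - s t) := by
  have h1 : ∑ t ∈ Finset.range (T + 1), a t * s t
      = ∑ t ∈ Finset.range T, a (t + 1) * s (t + 1) := by
    rw [Finset.sum_range_succ' (fun t => a t * s t) T, h0]
    ring
  have h2 : ∑ t ∈ Finset.range (T + 1), a (t + 1) * s t
      = ∑ t ∈ Finset.range T, a (t + 1) * s t := by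
    rw [Finset.sum_range_succ, hT]
    ring
  calc ∑ t ∈ Finset.range (T + 1), (a t - a (t + 1)) * s t
      = (∑ t ∈ Finset.range (T + 1), a t * s t)
        - ∑ t ∈ Finset.range (T + 1), a (t + 1) * s t := by
        rw [← Finset.sum_sub_distrib]; apply Finset.sum_congr rfl; intros; ring
    _ = (∑ t ∈ Finset.range T, a (t + 1) * s (t + 1))
        - ∑ t ∈ Finset.range T, a (t + 1) * s t := by rw [h1, h2]
    _ = _ := by rw [← Finset.sum_sub_distrib]; apply Finset.sum_congr rfl; intros; ring

/-- For an adapted process `S` with values in the bid-ask spread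
`[Sl, Su]` and a strategy `H` with `H 0 = 0` and `H (T+1) = 0`, the
transaction-cost value `V_T(H)` is dominated by the frictionless discrete
stochastic integral `(H ∘ S)_T`. -/
theorem transaction_cost_value_le_stochastic_integral
    (T d : ℕ) (Sl Su S : ℕ → Fin d → ℝ) (H : ℕ → Fin d → ℝ)
    (hspread : ∀ t ≤ T, ∀ j, Sl t j ≤ Su t j)
    (hS : ∀ t ≤ T, ∀ j, Sl t j ≤ S t j ∧ S t j ≤ Su t j)
    (hH0 : H 0 = 0) (hHT : H (T + 1) = 0) :
    (∑ t ∈ Finset.range (T + 1), ∑ j : Fin d,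
        (H t j - H (t + 1) j) *
          (if H t j ≤ H (t + 1) j then Su t j else Sl t j))
      ≤ ∑ t ∈ Finset.range T, ∑ j : Fin d,
          H (t + 1) j * (S (t + 1) j - S t j) := by
  have step1 : (∑ t ∈ Finset.range (T + 1), ∑ j : Fin d,
        (H t j - H (t + 1) j) *
          (if H t j ≤ H (t + 1) j then Su t j else Sl t j))
      ≤ ∑ t ∈ Finset.range (T + 1), ∑ j : Fin d,
          (H t j - H (t + 1) j) * S t j := by
    apply Finset.sum_le_sum
    intro t ht
    have htT : t ≤ T := Nat.lt_succ_iff.mp (Finset.mem_range.mp ht)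
    apply Finset.sum_le_sum
    intro j _
    by_cases h : H t j ≤ H (t + 1) j
    · simp only [h, if_true]
      apply mul_le_mul_of_nonpos_left ((hS t htT j).2) (by linarith)
    · simp only [h, if_false]
      apply mul_le_mul_of_nonneg_left ((hS t htT j).1) (by push_neg at h; linarith)
  refine step1.trans_eq ?_
  rw [Finset.sum_comm, Finset.sum_comm (s := Finset.range T)]
  apply Finset.sum_congr rfl
  intro j _
  exact abel_helper T (fun t => H t j) (fun t => S t j)
    (by simp [hH0]) (by simp [hHT])
end

section
/- Let K ⊆ R^d be a finite set (in [−∞,∞)-free reals), x ∈ R^d, and g : K → R. Define F(x) = inf { y ∈ R : ∃ H ∈ R^d with y + H·(s − x) ≥ g(s) for all s ∈ K }. Then F is upper semicontinuous on R^d (with values in R ∪ {−∞, +∞}): for every x and every sequence x_k → x, limsup_k F(x_k) ≤ F(x). -/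
/-!
A superhedge `(y, H)` at `x` is also a superhedge at any `x'`, at the price
`y + H · (x' - x)`: only the reference point of the hedge moves. This bound on `F(x')` is
continuous in `x'` and equals `y` at `x' = x`, so `limsup F(x_k) ≤ y`; taking the infimum over
all superhedging prices `y` at `x` gives the claim.
-/

open Filter

/-- The one-step superhedging price over a finite scenario set `K` with payoff
`g`, as an extended real number (`sInf ∅ = ⊤`, unbounded below gives `⊥`). -/
noncomputable def superhedgePrice3 (d : ℕ) (K : Finset (Fin d → ℝ))
    (g : (Fin d → ℝ) → ℝ) (x : Fin d → ℝ) : EReal :=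
  sInf ((fun y : ℝ => (y : EReal)) ''
    {y : ℝ | ∃ H : Fin d → ℝ, ∀ s ∈ K, g s ≤ y + ∑ i, H i * (s i - x i)})

open Topology

lemma superhedgePrice3_le_of_superhedge {d : ℕ} {K : Finset (Fin d → ℝ)}
    {g : (Fin d → ℝ) → ℝ} {x : Fin d → ℝ} {y : ℝ} {H : Fin d → ℝ}
    (hyH : ∀ s ∈ K, g s ≤ y + ∑ i, H i * (s i - x i)) (x' : Fin d → ℝ) :
    superhedgePrice3 d K g x' ≤ ((y + ∑ i, H i * (x' i - x i) : ℝ) : EReal) := by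
  refine sInf_le ⟨_, ⟨H, fun s hs => ?_⟩, rfl⟩
  have hshift : y + ∑ i, H i * (x' i - x i) + ∑ i, H i * (s i - x' i)
      = y + ∑ i, H i * (s i - x i) := by
    rw [add_assoc, ← Finset.sum_add_distrib]
    congr 1
    exact Finset.sum_congr rfl fun i _ => by ring
  exact hshift ▸ hyH s hs

/-- the superhedging price function is upper semicontinuous
along sequences: `limsup_k F(x_k) ≤ F(x)` whenever `x_k → x`. -/
theorem superhedgePrice_upper_semicontinuous
    (d : ℕ) (K : Finset (Fin d → ℝ)) (g : (Fin d → ℝ) → ℝ)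
    (x : Fin d → ℝ) (xk : ℕ → Fin d → ℝ)
    (hxk : Tendsto xk atTop (nhds x)) :
    limsup (fun k => superhedgePrice3 d K g (xk k)) atTop
      ≤ superhedgePrice3 d K g x := by
  refine le_sInf ?_
  rintro _ ⟨y, ⟨H, hyH⟩, rfl⟩
  have hbound_tendsto : Tendsto (fun k => ((y + ∑ i, H i * (xk k i - x i) : ℝ) : EReal))
      atTop (𝓝 (y : EReal)) := by
    have hcont :
        Continuous fun z : Fin d → ℝ => ((y + ∑ i, H i * (z i - x i) : ℝ) : EReal) :=
      continuous_coe_real_ereal.comp (by fun_prop)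
    simpa [Function.comp_def] using (hcont.tendsto x).comp hxk
  calc limsup (fun k => superhedgePrice3 d K g (xk k)) atTop
      ≤ limsup (fun k => ((y + ∑ i, H i * (xk k i - x i) : ℝ) : EReal)) atTop :=
        limsup_le_limsup (Eventually.of_forall fun k =>
          superhedgePrice3_le_of_superhedge hyH (xk k))
    _ = y := hbound_tendsto.limsup_eq
end

section
/- Let K ⊆ R^d be compact, g : K → R continuous, F(x) = inf{ y : ∃ H, y + H·(s−x) ≥ g(s) ∀ s ∈ K }, and D_F = {x : F(x) > −∞}. If F is finite somewhere, then x ∈ D_F implies x belongs to the closed convex hull of K, and conversely every point of the relative interior of the convex hull of K belongs to D_F. In particular, the closure of D_F is convex and equals the closed convex hull of K. -/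
/-- One-period superhedging price over the scenario set `K` with payoff `g`,
as an extended real number. -/
noncomputable def superhedgePrice6 (d : ℕ) (K : Set (Fin d → ℝ))
    (g : (Fin d → ℝ) → ℝ) (x : Fin d → ℝ) : EReal :=
  sInf ((fun y : ℝ => (y : EReal)) ''
    {y : ℝ | ∃ H : Fin d → ℝ, ∀ s ∈ K, g s ≤ y + ∑ i, H i * (s i - x i)})

/-- Every point of the convex hull of `K` is in the effective domain. -/
lemma convexHull_subset_domain (d : ℕ) (K : Set (Fin d → ℝ)) (hK : IsCompact K)
    (g : (Fin d → ℝ) → ℝ) (hg : ContinuousOn g K) (x : Fin d → ℝ)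
    (hx : x ∈ convexHull ℝ K) : ⊥ < superhedgePrice6 d K g x := by
  by_contra h
  have hbot : superhedgePrice6 d K g x = ⊥ := by
    rcases eq_or_lt_of_le (bot_le : ⊥ ≤ superhedgePrice6 d K g x) with h' | h'
    · exact h'.symm
    · exact absurd h' h
  -- g is bounded below on K
  obtain ⟨m, hm⟩ : BddBelow (g '' K) := (hK.image_of_continuousOn hg).bddBelow
  -- extract an element of the superhedging set below m - 2
  have hlt : sInf ((fun y : ℝ => (y : EReal)) ''
      {y : ℝ | ∃ H : Fin d → ℝ, ∀ s ∈ K, g s ≤ y + ∑ i, H i * (s i - x i)})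
      < ((m - 2 : ℝ) : EReal) := by
    rw [show sInf _ = superhedgePrice6 d K g x from rfl, hbot]
    exact EReal.bot_lt_coe _
  obtain ⟨a, ⟨y, ⟨H, hH⟩, rfl⟩, hy⟩ := sInf_lt_iff.mp hlt
  have hy2 : (y : EReal) < ((m - 2 : ℝ) : EReal) := hy
  have hy' : y < m - 2 := by exact_mod_cast hy2
  -- all scenarios satisfy 1 ≤ H·(s-x)
  have hsep : ∀ s ∈ K, (1 : ℝ) ≤ ∑ i, H i * (s i - x i) := by
    intro s hs
    have h1 : m ≤ g s := hm ⟨s, hs, rfl⟩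
    have h2 := hH s hs
    linarith
  -- the halfspace is convex and contains K, hence contains x
  have hconv : Convex ℝ {z : Fin d → ℝ | (1 : ℝ) ≤ ∑ i, H i * (z i - x i)} := by
    intro z hz w hw a b ha hb hab
    simp only [Set.mem_setOf_eq] at hz hw ⊢
    have key : ∑ i, H i * ((a • z + b • w) i - x i)
        = a * ∑ i, H i * (z i - x i) + b * ∑ i, H i * (w i - x i) := by
      rw [Finset.mul_sum, Finset.mul_sum, ← Finset.sum_add_distrib]
      refine Finset.sum_congr rfl fun i _ => ?_
      simp only [Pi.add_apply, Pi.smul_apply, smul_eq_mul]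
      linear_combination (H i * x i) * hab
    rw [key]
    nlinarith
  have hxC : x ∈ {z : Fin d → ℝ | (1 : ℝ) ≤ ∑ i, H i * (z i - x i)} :=
    convexHull_min (fun s hs => hsep s hs) hconv hx
  simp only [Set.mem_setOf_eq, sub_self, mul_zero, Finset.sum_const_zero] at hxC
  linarith

/-- Outside the closed convex hull, the superhedging price is `⊥`. -/
lemma domain_subset_closure_convexHull (d : ℕ) (K : Set (Fin d → ℝ)) (hK : IsCompact K)
    (g : (Fin d → ℝ) → ℝ) (hg : ContinuousOn g K) (x : Fin d → ℝ)
    (hx : x ∉ closure (convexHull ℝ K)) : superhedgePrice6 d K g x = ⊥ := by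
  obtain ⟨f, u, hfu, hux⟩ := geometric_hahn_banach_closed_point
    ((convex_convexHull ℝ K).closure) isClosed_closure hx
  set δ : ℝ := f x - u with hδdef
  have hδ : 0 < δ := by simp only [hδdef]; linarith
  obtain ⟨M, hM⟩ : BddAbove (g '' K) := (hK.image_of_continuousOn hg).bddAbove
  -- expansion of f on coordinates
  set e : Fin d → ℝ := fun i => f (fun j => if i = j then 1 else 0) with he
  have hf : ∀ v : Fin d → ℝ, f v = ∑ i, v i * e i := by
    intro v
    simpa [smul_eq_mul] using
      (f : (Fin d → ℝ) →ₗ[ℝ] ℝ).pi_apply_eq_sum_univ v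
  rw [superhedgePrice6, sInf_eq_bot]
  intro b hb
  obtain ⟨r, hr⟩ : ∃ r : ℝ, (r : EReal) < b := by
    induction b using EReal.rec with
    | bot => exact absurd hb (lt_irrefl _)
    | coe c => exact ⟨c - 1, by exact_mod_cast sub_one_lt c⟩
    | top => exact ⟨0, EReal.coe_lt_top 0⟩
  set lam : ℝ := max 0 ((M - r + 1) / δ) with hlam
  have hlam0 : 0 ≤ lam := le_max_left _ _
  have hlamδ : M - r + 1 ≤ lam * δ := by
    have h1 : (M - r + 1) / δ ≤ lam := le_max_right _ _
    calc M - r + 1 = ((M - r + 1) / δ) * δ := by field_simp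
    _ ≤ lam * δ := by nlinarith
  refine ⟨((M - lam * δ : ℝ) : EReal), ⟨M - lam * δ, ⟨fun i => -lam * e i, ?_⟩, rfl⟩, ?_⟩
  · intro s hs
    have hsK : s ∈ closure (convexHull ℝ K) :=
      subset_closure (subset_convexHull ℝ K hs)
    have hfs : f s < u := hfu s hsK
    have hsum : ∑ i, (-lam * e i) * (s i - x i) = lam * (f x - f s) := by
      rw [hf s, hf x]
      rw [← Finset.sum_sub_distrib, Finset.mul_sum]
      refine Finset.sum_congr rfl fun i _ => by ring
    rw [hsum]
    have hgs : g s ≤ M := hM ⟨s, hs, rfl⟩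
    have : lam * δ ≤ lam * (f x - f s) := by
      apply mul_le_mul_of_nonneg_left _ hlam0
      simp only [hδdef]; linarith
    linarith
  · refine lt_trans ?_ hr
    exact_mod_cast (by linarith : M - lam * δ < r)

/-- if `F` is finite somewhere, then the effective domain
`D_F = {x : F(x) > −∞}` is contained in the closed convex hull of `K`,
contains the relative interior of the convex hull of `K`, and its closure
equals the closed convex hull of `K` (in particular it is convex). -/
theorem effective_domain_of_superhedgePrice
    (d : ℕ) (K : Set (Fin d → ℝ)) (hK : IsCompact K)
    (g : (Fin d → ℝ) → ℝ) (hg : ContinuousOn g K)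
    (hfin : ∃ x0 : Fin d → ℝ,
        superhedgePrice6 d K g x0 ≠ ⊥ ∧ superhedgePrice6 d K g x0 ≠ ⊤) :
    (∀ x : Fin d → ℝ, ⊥ < superhedgePrice6 d K g x →
        x ∈ closure (convexHull ℝ K)) ∧
    (∀ x : Fin d → ℝ, x ∈ intrinsicInterior ℝ (convexHull ℝ K) →
        ⊥ < superhedgePrice6 d K g x) ∧
    closure {x : Fin d → ℝ | ⊥ < superhedgePrice6 d K g x}
      = closure (convexHull ℝ K) := by
  have h1 : ∀ x : Fin d → ℝ, ⊥ < superhedgePrice6 d K g x →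
      x ∈ closure (convexHull ℝ K) := by
    intro x hx
    by_contra hc
    rw [domain_subset_closure_convexHull d K hK g hg x hc] at hx
    exact lt_irrefl _ hx
  have h2 : ∀ x : Fin d → ℝ, x ∈ intrinsicInterior ℝ (convexHull ℝ K) →
      ⊥ < superhedgePrice6 d K g x := fun x hx =>
    convexHull_subset_domain d K hK g hg x (intrinsicInterior_subset hx)
  refine ⟨h1, h2, Set.Subset.antisymm ?_ ?_⟩
  · exact closure_minimal h1 isClosed_closure
  · calc closure (convexHull ℝ K)
        ⊆ closure {x : Fin d → ℝ | ⊥ < superhedgePrice6 d K g x} :=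
          closure_mono (fun x hx => convexHull_subset_domain d K hK g hg x hx)
    _ = _ := rfl
end

section
/- Let Ψ : Ω → 2^{R^n} be an A-measurable multifunction on a measurable space (Ω, A) and ε > 0. Then the multifunction Ψ^ε(ω) = { v ∈ R^n : v·s ≥ ε for all s ∈ Ψ(ω) \ {0} } is A-measurable and closed-valued. -/
open Metric Set Filter Topology

private lemma epsDual_isClosed_aux {n : ℕ} (ε : ℝ) (S : Set (Fin n → ℝ)) :
    IsClosed {v : Fin n → ℝ | ∀ s ∈ S, s ≠ 0 → ε ≤ ∑ i, v i * s i} := by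
  have : {v : Fin n → ℝ | ∀ s ∈ S, s ≠ 0 → ε ≤ ∑ i, v i * s i}
      = ⋂ (s : Fin n → ℝ) (_ : s ∈ S) (_ : s ≠ 0), {v | ε ≤ ∑ i, v i * s i} := by
    ext v; simp [Set.mem_iInter]
  rw [this]
  refine isClosed_iInter fun s => isClosed_iInter fun _ => isClosed_iInter fun _ => ?_
  exact isClosed_le continuous_const
    (continuous_finset_sum _ fun i _ => (continuous_apply i).mul continuous_const)

/-- the set of `N`-tuples `σ` such that some `v ∈ K` satisfies `v · σ i ≥ ε` for all `i` -/
private def GNset (n : ℕ) (ε : ℝ) (K : Set (Fin n → ℝ)) (N : ℕ) : Set (Fin N → Fin n → ℝ) :=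
  {σ | ∃ v ∈ K, ∀ i, ε ≤ ∑ j, v j * σ i j}

private lemma isClosed_GNset {n : ℕ} (ε : ℝ) {K : Set (Fin n → ℝ)} (hK : IsCompact K)
    (N : ℕ) : IsClosed (GNset n ε K N) := by
  apply IsSeqClosed.isClosed
  intro σ σ₀ hmem hlim
  choose v hvK hv using hmem
  obtain ⟨w, hwK, φ, hφ, hwt⟩ := hK.tendsto_subseq hvK
  refine ⟨w, hwK, fun i => ?_⟩
  have hσ : Tendsto (fun k => σ (φ k)) atTop (𝓝 σ₀) := hlim.comp hφ.tendsto_atTop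
  have h1 : Tendsto (fun k => ∑ j, v (φ k) j * σ (φ k) i j) atTop
      (𝓝 (∑ j, w j * σ₀ i j)) := by
    apply tendsto_finset_sum
    intro j _
    exact (tendsto_pi_nhds.1 hwt j).mul
      (tendsto_pi_nhds.1 (tendsto_pi_nhds.1 hσ i) j)
  exact ge_of_tendsto h1 (Eventually.of_forall fun k => hv (φ k) i)

private lemma inter_compact_nonempty_iff {n : ℕ} (ε : ℝ) (S : Set (Fin n → ℝ))
    {K : Set (Fin n → ℝ)} (hK : IsCompact K) :
    ({v : Fin n → ℝ | ∀ s ∈ S, s ≠ 0 → ε ≤ ∑ i, v i * s i} ∩ K).Nonempty ↔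
      ∀ (N : ℕ) (σ : Fin N → Fin n → ℝ), (∀ i, σ i ∈ S ∧ σ i ≠ 0) →
        σ ∈ GNset n ε K N := by
  classical
  constructor
  · rintro ⟨v, hv, hvK⟩ N σ hσ
    exact ⟨v, hvK, fun i => hv (σ i) (hσ i).1 (hσ i).2⟩
  · intro h
    by_contra hemp
    rw [Set.not_nonempty_iff_eq_empty] at hemp
    set Z : (Fin n → ℝ) → Set (Fin n → ℝ) :=
      fun s => {v | s ∈ S → s ≠ 0 → ε ≤ ∑ i, v i * s i} with hZdef
    have hZ : ∀ s, IsClosed (Z s) := by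
      intro s
      by_cases hs : s ∈ S ∧ s ≠ 0
      · have : Z s = {v | ε ≤ ∑ i, v i * s i} := by
          ext v; simp [hZdef, hs.1, hs.2]
        rw [this]
        exact isClosed_le continuous_const
          (continuous_finset_sum _ fun i _ => (continuous_apply i).mul continuous_const)
      · have : Z s = univ := by
          ext v
          simp only [hZdef, mem_setOf_eq, mem_univ, iff_true]
          intro h1 h2; exact absurd ⟨h1, h2⟩ hs
        rw [this]; exact isClosed_univ
    have hKZ : K ∩ ⋂ s, Z s = ∅ := by
      rw [← hemp, Set.inter_comm]
      congr 1
      ext v; simp [hZdef]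
    obtain ⟨t, ht⟩ := hK.elim_finite_subfamily_closed Z hZ hKZ
    set t' : Finset (Fin n → ℝ) := t.filter (fun s => s ∈ S ∧ s ≠ 0) with ht'def
    set N := t'.card with hN
    set e := t'.equivFin with he
    set σ : Fin N → Fin n → ℝ := fun i => (e.symm i : Fin n → ℝ) with hσdef
    have hσ : ∀ i, σ i ∈ S ∧ σ i ≠ 0 := by
      intro i
      have h2 := (e.symm i).2
      exact (Finset.mem_filter.1 h2).2
    obtain ⟨v, hvK, hvσ⟩ := h N σ hσ
    have hv : v ∈ K ∩ ⋂ s ∈ t, Z s := by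
      refine ⟨hvK, ?_⟩
      simp only [Set.mem_iInter]
      intro s hst hsS hs0
      have hst' : s ∈ t' := Finset.mem_filter.2 ⟨hst, hsS, hs0⟩
      have hss : σ (e ⟨s, hst'⟩) = s := by simp [hσdef]
      have := hvσ (e ⟨s, hst'⟩)
      rwa [hss] at this
    rw [ht] at hv
    exact hv

private lemma meas_tupleset {n : ℕ} (Ω : Type*) [MeasurableSpace Ω]
    (Ψ : Ω → Set (Fin n → ℝ))
    (hΨ : ∀ O : Set (Fin n → ℝ), IsOpen O → MeasurableSet {ω : Ω | (Ψ ω ∩ O).Nonempty})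
    (ε : ℝ) {K : Set (Fin n → ℝ)} (hK : IsCompact K) (N : ℕ) :
    MeasurableSet {ω : Ω | ∀ σ : Fin N → Fin n → ℝ,
      (∀ i, σ i ∈ Ψ ω ∧ σ i ≠ 0) → σ ∈ GNset n ε K N} := by
  classical
  obtain ⟨D, hDc, hDd⟩ := TopologicalSpace.exists_countable_dense (Fin n → ℝ)
  have : Countable ↥D := hDc.to_subtype
  have key : {ω : Ω | ∀ σ : Fin N → Fin n → ℝ,
      (∀ i, σ i ∈ Ψ ω ∧ σ i ≠ 0) → σ ∈ GNset n ε K N}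
      = (⋃ (d : Fin N → ↥D) (q : ℚ)
          (_ : ∀ τ : Fin N → Fin n → ℝ,
            (∀ i, τ i ∈ ball ((d i : Fin n → ℝ)) (q : ℝ)) → τ ∉ GNset n ε K N),
          ⋂ i, {ω : Ω | (Ψ ω ∩ (ball ((d i : Fin n → ℝ)) (q : ℝ) ∩ {s | s ≠ 0})).Nonempty})ᶜ := by
    ext ω
    simp only [Set.mem_compl_iff, Set.mem_iUnion, Set.mem_iInter, Set.mem_setOf_eq,
      not_exists]
    constructor
    · intro hall d q hcond hhit
      choose s hs using hhit
      exact hcond (fun i => s i) (fun i => (hs i).2.1)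
        (hall (fun i => s i) (fun i => ⟨(hs i).1, (hs i).2.2⟩))
    · intro hno σ hσ
      by_contra hσG
      have hW : IsOpen (GNset n ε K N)ᶜ := (isClosed_GNset ε hK N).isOpen_compl
      obtain ⟨δ, hδ0, hδ⟩ := Metric.isOpen_iff.1 hW σ hσG
      have hpick : ∀ i, ∃ y ∈ D, dist (σ i) y < δ / 3 :=
        fun i => hDd.exists_dist_lt (σ i) (by linarith)
      choose d' hd'D hd' using hpick
      obtain ⟨q, hq1, hq2⟩ := exists_rat_btwn (show δ / 3 < δ / 2 by linarith)
      refine hno (fun i => ⟨d' i, hd'D i⟩) q ?_ ?_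
      · intro τ hτ hτG
        have : τ ∈ ball σ δ := by
          rw [mem_ball, dist_pi_lt_iff hδ0]
          intro i
          have h1 : dist (τ i) (d' i) < (q : ℝ) := hτ i
          have h2 : dist (d' i) (σ i) < δ / 3 := by rw [dist_comm]; exact hd' i
          calc dist (τ i) (σ i) ≤ dist (τ i) (d' i) + dist (d' i) (σ i) := dist_triangle _ _ _
            _ < (q : ℝ) + δ / 3 := by linarith
            _ < δ := by linarith
        exact hδ this hτG
      · intro i
        refine ⟨σ i, (hσ i).1, ?_, (hσ i).2⟩
        rw [mem_ball]
        calc dist (σ i) (d' i) < δ / 3 := hd' i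
          _ < (q : ℝ) := hq1
  rw [key]
  refine MeasurableSet.compl ?_
  refine MeasurableSet.iUnion fun d => MeasurableSet.iUnion fun q =>
    MeasurableSet.iUnion fun _ => MeasurableSet.iInter fun i => ?_
  have hopen : IsOpen (ball ((d i : Fin n → ℝ)) (q : ℝ) ∩ {s | s ≠ 0}) := by
    refine isOpen_ball.inter ?_
    have : {s : Fin n → ℝ | s ≠ 0} = ({0} : Set (Fin n → ℝ))ᶜ := by ext; simp
    rw [this]
    exact isClosed_singleton.isOpen_compl
  exact hΨ _ hopen

/-- the `ε`-dual `Ψ^ε(ω) = {v : v·s ≥ ε ∀ s ∈ Ψ(ω) \ {0}}` of a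
measurable multifunction `Ψ` is a measurable, closed-valued multifunction. -/
theorem epsDual_measurable_and_closed
    (Ω : Type*) [MeasurableSpace Ω] (n : ℕ)
    (Ψ : Ω → Set (Fin n → ℝ))
    (hΨ : ∀ O : Set (Fin n → ℝ), IsOpen O →
        MeasurableSet {ω : Ω | (Ψ ω ∩ O).Nonempty})
    (ε : ℝ) (hε : 0 < ε) :
    (∀ O : Set (Fin n → ℝ), IsOpen O →
        MeasurableSet {ω : Ω |
          ({v : Fin n → ℝ | ∀ s ∈ Ψ ω, s ≠ 0 → ε ≤ ∑ i, v i * s i} ∩ O).Nonempty}) ∧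
    (∀ ω : Ω,
        IsClosed {v : Fin n → ℝ | ∀ s ∈ Ψ ω, s ≠ 0 → ε ≤ ∑ i, v i * s i}) := by
  classical
  refine ⟨?_, fun ω => epsDual_isClosed_aux ε (Ψ ω)⟩
  intro O hO
  obtain ⟨D, hDc, hDd⟩ := TopologicalSpace.exists_countable_dense (Fin n → ℝ)
  have : Countable ↥D := hDc.to_subtype
  have key : {ω : Ω |
      ({v : Fin n → ℝ | ∀ s ∈ Ψ ω, s ≠ 0 → ε ≤ ∑ i, v i * s i} ∩ O).Nonempty}
      = ⋃ (d : ↥D) (q : ℚ) (_ : closedBall ((d : Fin n → ℝ)) (q : ℝ) ⊆ O),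
          {ω : Ω | ({v : Fin n → ℝ | ∀ s ∈ Ψ ω, s ≠ 0 → ε ≤ ∑ i, v i * s i}
            ∩ closedBall ((d : Fin n → ℝ)) (q : ℝ)).Nonempty} := by
    ext ω
    simp only [Set.mem_iUnion, Set.mem_setOf_eq]
    constructor
    · rintro ⟨v, hv, hvO⟩
      obtain ⟨δ, hδ0, hδ⟩ := Metric.isOpen_iff.1 hO v hvO
      obtain ⟨d, hdD, hd⟩ := hDd.exists_dist_lt v (show (0:ℝ) < δ / 4 by linarith)
      obtain ⟨q, hq1, hq2⟩ := exists_rat_btwn (show δ / 4 < δ / 2 by linarith)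
      refine ⟨⟨d, hdD⟩, q, ?_, v, hv, ?_⟩
      · intro x hx
        apply hδ
        rw [mem_ball]
        have h1 : dist x d ≤ (q : ℝ) := hx
        have h2 : dist d v < δ / 4 := by rw [dist_comm]; exact hd
        calc dist x v ≤ dist x d + dist d v := dist_triangle _ _ _
          _ < (q : ℝ) + δ / 4 := by linarith
          _ < δ := by linarith
      · rw [mem_closedBall]
        exact le_of_lt (hd.trans hq1)
    · rintro ⟨d, q, hsub, v, hv, hvB⟩
      exact ⟨v, hv, hsub hvB⟩
  rw [key]
  refine MeasurableSet.iUnion fun d => MeasurableSet.iUnion fun q =>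
    MeasurableSet.iUnion fun _ => ?_
  have hK : IsCompact (closedBall ((d : Fin n → ℝ)) (q : ℝ)) := isCompact_closedBall _ _
  have key2 : {ω : Ω | ({v : Fin n → ℝ | ∀ s ∈ Ψ ω, s ≠ 0 → ε ≤ ∑ i, v i * s i}
      ∩ closedBall ((d : Fin n → ℝ)) (q : ℝ)).Nonempty}
      = ⋂ (N : ℕ), {ω : Ω | ∀ σ : Fin N → Fin n → ℝ,
          (∀ i, σ i ∈ Ψ ω ∧ σ i ≠ 0) →
            σ ∈ GNset n ε (closedBall ((d : Fin n → ℝ)) (q : ℝ)) N} := by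
    ext ω
    simp only [Set.mem_iInter, Set.mem_setOf_eq]
    exact inter_compact_nonempty_iff ε (Ψ ω) hK
  rw [key2]
  exact MeasurableSet.iInter fun N => meas_tupleset Ω Ψ hΨ ε hK N
end

section
/- Let K be a finite subset of R^d, g : K → R, x ∈ ri(conv K), y ∈ R, and suppose y < F(x) where F(x) = inf{ z : ∃ H, z + H·(s−x) ≥ g(s) ∀ s ∈ K } and y > G(x) = sup{ z : ∃ H, z + H·(s−x) ≤ g(s) ∀ s ∈ K }. Let Γ_y(x) = cone(conv{ (s − x, y − g(s)) : s ∈ K }) ⊆ R^{d+1}. If 0 ∈ int(Γ_y(x)), then there exists ε > 0 such that for every x̃ with ‖x̃ − x‖ < ε, F(x̃) > y. -/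
/-! Since `Γ_y(x)` is a union of rays, `0 ∈ int Γ_y(x)` forces `Γ_y(x)` to be the whole space,
and then a separation argument shows that `0` is interior even to the convex hull `C` of the
generators `(s − x, y − g s)`. Hence for some `r > 0` and all `x̃` near `x`, `(x̃ − x, −r/2) ∈ C`:
a probability on `K` with barycentre `x̃` under which `g` has mean `y + r/2`. A superhedge at `x̃`
dominates `g` on `K`, so its price dominates this mean, and `F(x̃) ≥ y + r/2`. -/

/-- One-period superhedging price over the finite scenario set `K`. -/
noncomputable def superPrice14 (d : ℕ) (K : Finset (Fin d → ℝ))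
    (g : (Fin d → ℝ) → ℝ) (x : Fin d → ℝ) : EReal :=
  sInf ((fun z : ℝ => (z : EReal)) ''
    {z : ℝ | ∃ H : Fin d → ℝ, ∀ s ∈ K, g s ≤ z + ∑ i, H i * (s i - x i)})

/-- One-period subhedging price over the finite scenario set `K`. -/
noncomputable def subPrice14 (d : ℕ) (K : Finset (Fin d → ℝ))
    (g : (Fin d → ℝ) → ℝ) (x : Fin d → ℝ) : EReal :=
  sSup ((fun z : ℝ => (z : EReal)) ''
    {z : ℝ | ∃ H : Fin d → ℝ, ∀ s ∈ K, z + ∑ i, H i * (s i - x i) ≤ g s})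

open Set Filter Topology

def raysThrough {E : Type*} [AddCommGroup E] [Module ℝ E] (C : Set E) : Set E :=
  {z | ∃ c : ℝ, 0 ≤ c ∧ ∃ p ∈ C, z = c • p}

section RaysThrough

variable {E : Type*} [AddCommGroup E] [Module ℝ E] {C : Set E}

theorem raysThrough_eq_univ_of_mem_nhds [TopologicalSpace E] [ContinuousSMul ℝ E]
    (h : raysThrough C ∈ 𝓝 0) : raysThrough C = univ := by
  refine eq_univ_of_forall fun v => ?_
  have hv : Tendsto (fun t : ℝ => t • v) (𝓝[>] 0) (𝓝 0) := by
    have hcont : Continuous fun t : ℝ => t • v := continuous_id.smul continuous_const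
    simpa using (hcont.tendsto 0).mono_left nhdsWithin_le_nhds
  obtain ⟨t, ⟨c, hc, p, hp, htv⟩, ht⟩ := ((hv.eventually h).and self_mem_nhdsWithin).exists
  refine ⟨t⁻¹ * c, mul_nonneg (inv_nonneg.mpr (le_of_lt ht)) hc, p, hp, ?_⟩
  rw [mul_smul, ← htv, inv_smul_smul₀ (ne_of_gt ht)]

theorem eq_zero_of_forall_nonpos_of_raysThrough_eq_univ (h : raysThrough C = univ)
    (f : E →ₗ[ℝ] ℝ) (hf : ∀ p ∈ C, f p ≤ 0) : f = 0 := by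
  have hle : ∀ v, f v ≤ 0 := fun v => by
    obtain ⟨c, hc, p, hp, rfl⟩ := h.symm ▸ mem_univ v
    simpa using mul_nonpos_of_nonneg_of_nonpos hc (hf p hp)
  ext v
  simpa using le_antisymm (hle v) (by simpa using hle (-v))

theorem zero_mem_of_raysThrough_eq_univ (hC : Convex ℝ C) (h : raysThrough C = univ) :
    (0 : E) ∈ C := by
  obtain ⟨-, -, p, hp, -⟩ := h.symm ▸ mem_univ (0 : E)
  obtain ⟨c, hc, q, hq, hpq⟩ := h.symm ▸ mem_univ (-p)
  -- `0 = p + c • q`, which normalises to a convex combination of `p` and `q`.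
  have := hC hp hq (a := (1 + c)⁻¹) (b := (1 + c)⁻¹ * c) (by positivity) (by positivity)
    (by field_simp)
  convert this using 1
  rw [mul_smul, ← smul_add, ← hpq, add_neg_cancel, smul_zero]

theorem affineSpan_eq_top_of_raysThrough_eq_univ (hC : Convex ℝ C) (h : raysThrough C = univ) :
    affineSpan ℝ C = ⊤ := by
  have h0 := zero_mem_of_raysThrough_eq_univ hC h
  rw [AffineSubspace.affineSpan_eq_top_iff_vectorSpan_eq_top_of_nonempty ℝ _ _ ⟨0, h0⟩,
    vectorSpan_eq_span_vsub_set_right ℝ h0, Submodule.eq_top_iff']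
  intro v
  obtain ⟨c, -, p, hp, rfl⟩ := h.symm ▸ mem_univ v
  exact Submodule.smul_mem _ c (Submodule.subset_span ⟨p, hp, by simp⟩)

end RaysThrough

theorem zero_mem_interior_of_raysThrough_eq_univ {E : Type*} [NormedAddCommGroup E]
    [NormedSpace ℝ E] [FiniteDimensional ℝ E] {C : Set E} (hC : Convex ℝ C)
    (h : raysThrough C = univ) : (0 : E) ∈ interior C := by
  by_contra h0
  have hint : (interior C).Nonempty :=
    hC.interior_nonempty_iff_affineSpan_eq_top.mpr (affineSpan_eq_top_of_raysThrough_eq_univ hC h)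
  obtain ⟨f, hf, hfC⟩ := geometric_hahn_banach_of_nonempty_interior_point hC h0 hint
  exact hf (ContinuousLinearMap.coe_injective
    (eq_zero_of_forall_nonpos_of_raysThrough_eq_univ h f fun p hp => by simpa using hfC p hp))

theorem le_superPrice14_of_mem_convexHull {d : ℕ} {K : Finset (Fin d → ℝ)}
    {g : (Fin d → ℝ) → ℝ} {x x' : Fin d → ℝ} {y t : ℝ}
    (h : (x' - x, t) ∈ convexHull ℝ ((fun s => (s - x, y - g s)) '' (K : Set (Fin d → ℝ)))) :
    ((y - t : ℝ) : EReal) ≤ superPrice14 d K g x' := by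
  refine le_sInf ?_
  rintro _ ⟨z, ⟨H, hH⟩, rfl⟩
  -- A superhedge `(z, H)` at `x'` gives a half-space containing every generator, hence their hull.
  have hhalf : convexHull ℝ ((fun s => (s - x, y - g s)) '' (K : Set (Fin d → ℝ))) ⊆
      {q | y - z + H ⬝ᵥ (x' - x) ≤ H ⬝ᵥ q.1 + q.2} := by
    refine convexHull_min ?_ (convex_halfSpace_ge ?_ _)
    · rintro _ ⟨s, hs, rfl⟩
      have hsx : H ⬝ᵥ (s - x) = H ⬝ᵥ (s - x') + H ⬝ᵥ (x' - x) := by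
        rw [← dotProduct_add, sub_add_sub_cancel]
      have := hH s hs
      simp only [mem_ofPred_eq, hsx]
      change _ ≤ _ + H ⬝ᵥ (s - x') at this
      linarith
    · exact ⟨fun a b => by simp only [Prod.fst_add, Prod.snd_add, dotProduct_add]; ring,
        fun c a => by simp only [Prod.smul_fst, Prod.smul_snd, dotProduct_smul, smul_eq_mul]; ring⟩
  have := hhalf h
  simp only [mem_ofPred_eq] at this
  exact EReal.coe_le_coe_iff.mpr (by linarith)

theorem superPrice_locally_above_level_general
    (d : ℕ) (K : Finset (Fin d → ℝ)) (g : (Fin d → ℝ) → ℝ)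
    (x : Fin d → ℝ)
    (y : ℝ)
    (hcone : (0 : (Fin d → ℝ) × ℝ) ∈ interior
        {z : (Fin d → ℝ) × ℝ | ∃ c : ℝ, 0 ≤ c ∧
          ∃ p ∈ convexHull ℝ
              ((fun s : Fin d → ℝ => (s - x, y - g s)) '' (K : Set (Fin d → ℝ))),
            z = c • p}) :
    ∃ ε > (0 : ℝ), ∀ x' : Fin d → ℝ, dist x' x < ε →
      (y : EReal) < superPrice14 d K g x' := by
  set C := convexHull ℝ ((fun s : Fin d → ℝ => (s - x, y - g s)) '' (K : Set (Fin d → ℝ)))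
  have hrays : raysThrough C = univ :=
    raysThrough_eq_univ_of_mem_nhds (mem_interior_iff_mem_nhds.mp hcone)
  obtain ⟨r, hr, hball⟩ := Metric.mem_nhds_iff.mp <| mem_interior_iff_mem_nhds.mp <|
    zero_mem_interior_of_raysThrough_eq_univ (convex_convexHull ℝ _) hrays
  refine ⟨r, hr, fun x' hx' => ?_⟩
  have hmem : (x' - x, -(r / 2)) ∈ C := hball <| by
    rw [mem_ball_zero_iff, Prod.norm_def, ← dist_eq_norm, norm_neg,
      Real.norm_of_nonneg (by positivity)]
    exact max_lt hx' (by linarith)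
  calc (y : EReal) < ((y - -(r / 2) : ℝ) : EReal) := EReal.coe_lt_coe_iff.mpr (by linarith)
    _ ≤ superPrice14 d K g x' := le_superPrice14_of_mem_convexHull hmem

/-- if `G(x) < y < F(x)` with `x ∈ ri(conv K)` and `0` lies in
the interior of the cone `Γ_y(x)` generated by the vectors `(s − x, y − g s)`,
then `F(x̃) > y` for all `x̃` in a neighbourhood of `x`. -/
theorem superPrice_locally_above_level
    (d : ℕ) (K : Finset (Fin d → ℝ)) (g : (Fin d → ℝ) → ℝ)
    (x : Fin d → ℝ)
    (hx : x ∈ intrinsicInterior ℝ (convexHull ℝ (K : Set (Fin d → ℝ))))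
    (y : ℝ)
    (hyF : (y : EReal) < superPrice14 d K g x)
    (hyG : subPrice14 d K g x < (y : EReal))
    (hcone : (0 : (Fin d → ℝ) × ℝ) ∈ interior
        {z : (Fin d → ℝ) × ℝ | ∃ c : ℝ, 0 ≤ c ∧
          ∃ p ∈ convexHull ℝ
              ((fun s : Fin d → ℝ => (s - x, y - g s)) '' (K : Set (Fin d → ℝ))),
            z = c • p}) :
    ∃ ε > (0 : ℝ), ∀ x' : Fin d → ℝ, dist x' x < ε →
      (y : EReal) < superPrice14 d K g x' :=
  superPrice_locally_above_level_general d K g x y hcone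
end

section
/- Let K ⊆ R^d be a finite set, g : K → R, and for x ∈ R^d let H(x) = { H ∈ R^d : F(x) + H·(s − x) ≥ g(s) ∀ s ∈ K } be the set of optimal superhedging strategies, where F(x) = inf{ y : ∃H, y + H·(s−x) ≥ g(s) ∀s∈K } is assumed finite at the points below. Then for all y_0, y_1 ∈ R^d with F(y_0), F(y_1) finite and all λ ∈ [0,1]: H(y_0) ∩ H(y_1) ⊆ H((1−λ)y_0 + λ y_1), and for any H̃ ∈ H(y_0) ∩ H(y_1), F((1−λ)y_0 + λ y_1) = F(y_0) + λ H̃·(y_1 − y_0). -/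
/-- The set of acceptable initial capitals for superhedging `g` over the
finite scenario set `K` at spot `x`. -/
def capitals19 (d : ℕ) (K : Finset (Fin d → ℝ)) (g : (Fin d → ℝ) → ℝ)
    (x : Fin d → ℝ) : Set ℝ :=
  {y : ℝ | ∃ H : Fin d → ℝ, ∀ s ∈ K, g s ≤ y + ∑ i, H i * (s i - x i)}

/-- The superhedging price. -/
noncomputable def price19 (d : ℕ) (K : Finset (Fin d → ℝ))
    (g : (Fin d → ℝ) → ℝ) (x : Fin d → ℝ) : ℝ :=
  sInf (capitals19 d K g x)

/-- The set of optimal superhedging strategies. -/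
def optimal19 (d : ℕ) (K : Finset (Fin d → ℝ)) (g : (Fin d → ℝ) → ℝ)
    (x : Fin d → ℝ) : Set (Fin d → ℝ) :=
  {H : Fin d → ℝ | ∀ s ∈ K, g s ≤ price19 d K g x + ∑ i, H i * (s i - x i)}

/-- a strategy optimal at both endpoints `y₀, y₁` (where the
superhedging price is finite) remains optimal along the segment, and the
price is affine there: `F((1−λ)y₀ + λy₁) = F(y₀) + λ H̃·(y₁ − y₀)`. -/
theorem optimal_strategy_affine_on_segment
    (d : ℕ) (K : Finset (Fin d → ℝ)) (g : (Fin d → ℝ) → ℝ)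
    (y0 y1 : Fin d → ℝ)
    (h0ne : (capitals19 d K g y0).Nonempty) (h0bdd : BddBelow (capitals19 d K g y0))
    (h1ne : (capitals19 d K g y1).Nonempty) (h1bdd : BddBelow (capitals19 d K g y1))
    (lam : ℝ) (hlam : lam ∈ Set.Icc (0 : ℝ) 1)
    (Htilde : Fin d → ℝ)
    (hHt : Htilde ∈ optimal19 d K g y0 ∩ optimal19 d K g y1) :
    Htilde ∈ optimal19 d K g ((1 - lam) • y0 + lam • y1) ∧
    price19 d K g ((1 - lam) • y0 + lam • y1)
      = price19 d K g y0 + lam * ∑ i, Htilde i * (y1 i - y0 i) := by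
  obtain ⟨hlam0, hlam1⟩ := hlam
  obtain ⟨hHt0, hHt1⟩ := hHt
  set F0 := price19 d K g y0 with hF0
  set F1 := price19 d K g y1 with hF1
  set c := ∑ i, Htilde i * (y1 i - y0 i) with hc
  set yl := (1 - lam) • y0 + lam • y1 with hyl
  have hylap : ∀ i, yl i = y0 i + lam * (y1 i - y0 i) := by
    intro i
    simp [hyl, Pi.add_apply, Pi.smul_apply, smul_eq_mul]
    ring
  -- split identities
  have split1 : ∀ (H : Fin d → ℝ) (s : Fin d → ℝ),
      ∑ i, H i * (s i - y0 i)
        = ∑ i, H i * (s i - y1 i) + ∑ i, H i * (y1 i - y0 i) := by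
    intro H s
    rw [← Finset.sum_add_distrib]
    exact Finset.sum_congr rfl (fun i _ => by ring)
  have splitl : ∀ (H : Fin d → ℝ) (s : Fin d → ℝ),
      ∑ i, H i * (s i - yl i)
        = ∑ i, H i * (s i - y0 i) - lam * ∑ i, H i * (y1 i - y0 i) := by
    intro H s
    rw [Finset.mul_sum, ← Finset.sum_sub_distrib]
    refine Finset.sum_congr rfl (fun i _ => ?_)
    rw [hylap i]; ring
  have splitl1 : ∀ (H : Fin d → ℝ) (s : Fin d → ℝ),
      ∑ i, H i * (s i - yl i)
        = ∑ i, H i * (s i - y1 i) + (1 - lam) * ∑ i, H i * (y1 i - y0 i) := by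
    intro H s
    rw [splitl H s, split1 H s]; ring
  -- F1 ≤ F0 + c
  have h1le : F1 ≤ F0 + c := by
    apply csInf_le h1bdd
    exact ⟨Htilde, fun s hs => by
      have := hHt0 s hs
      rw [split1 Htilde s] at this
      linarith⟩
  -- F0 + c ≤ F1
  have h0le : F0 + c ≤ F1 := by
    have : F0 ≤ F1 - c := by
      apply csInf_le h0bdd
      exact ⟨Htilde, fun s hs => by
        have := hHt1 s hs
        rw [split1 Htilde s]
        linarith⟩
    linarith
  have hFeq : F1 = F0 + c := le_antisymm h1le h0le
  -- membership of the candidate price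
  have hmem : F0 + lam * c ∈ capitals19 d K g yl := by
    refine ⟨Htilde, fun s hs => ?_⟩
    have := hHt0 s hs
    rw [splitl Htilde s, ← hc]
    linarith
  -- lower bound
  have hlb : ∀ y ∈ capitals19 d K g yl, F0 + lam * c ≤ y := by
    rintro y ⟨H, hH⟩
    set b := ∑ i, H i * (y1 i - y0 i) with hb
    have hA : F0 ≤ y - lam * b := by
      apply csInf_le h0bdd
      exact ⟨H, fun s hs => by
        have := hH s hs
        rw [splitl H s, ← hb] at this
        linarith⟩
    have hB : F1 ≤ y + (1 - lam) * b := by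
      apply csInf_le h1bdd
      exact ⟨H, fun s hs => by
        have := hH s hs
        rw [splitl1 H s, ← hb] at this
        linarith⟩
    nlinarith [hFeq]
  have hprice : price19 d K g yl = F0 + lam * c :=
    le_antisymm (csInf_le ⟨F0 + lam * c, hlb⟩ hmem) (le_csInf ⟨_, hmem⟩ hlb)
  constructor
  · intro s hs
    rw [hprice, splitl Htilde s, ← hc]
    have := hHt0 s hs
    linarith
  · exact hprice
end
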